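/- (Invariant functions of momentum and spin.) Let f be a C¹ real-valued function on {(x,p,s) ∈ Γ : p ≠ 0} satisfying {P_a, f} = 0 and {J_ab, f} = 0 for all a,b. Then f depends on phase space only through |p|, (p·s)/|p| and |s|: there exists a function F : ℝ³ → ℝ such that f(x,p,s) = F(|p|, (p·s)/|p|, |s|) for all (x,p,s) with p ≠ 0. -/

import Mathlib

noncomputable section

open Finset

abbrev R3 := Fin 3 → ℝ

/-- The spin phase space Γ = ℝ³ × ℝ³ × ℝ³ with points (x, p, s). -/
abbrev Phase := R3 × R3 × R3

/-- Euclidean dot product on ℝ³. -/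
def dot3 (v w : R3) : ℝ := ∑ a, v a * w a

/-- Euclidean norm on ℝ³. -/
def norm3 (v : R3) : ℝ := Real.sqrt (dot3 v v)

/-- Cross product on ℝ³. -/
def cross3 (v w : R3) : R3 :=
  ![v 1 * w 2 - v 2 * w 1, v 2 * w 0 - v 0 * w 2, v 0 * w 1 - v 1 * w 0]

/-- Kronecker delta. -/
def kdelta (a b : Fin 3) : ℝ := if a = b then 1 else 0

/-- Sign of an integer, valued in ℝ. -/
def isgn (x : ℤ) : ℝ := if 0 < x then 1 else if x < 0 then -1 else 0

/-- Totally antisymmetric symbol on three indices with ε₀₁₂ = +1. -/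
def eps3 (a b c : Fin 3) : ℝ :=
  isgn (((b : ℕ) : ℤ) - ((a : ℕ) : ℤ)) * isgn (((c : ℕ) : ℤ) - ((a : ℕ) : ℤ)) *
  isgn (((c : ℕ) : ℤ) - ((b : ℕ) : ℤ))

/-- Gradient of f with respect to x. -/
def dX (f : Phase → ℝ) (γ : Phase) : R3 := fun a => fderiv ℝ f γ (Pi.single a 1, 0, 0)

/-- Gradient of f with respect to p. -/
def dP (f : Phase → ℝ) (γ : Phase) : R3 := fun a => fderiv ℝ f γ (0, Pi.single a 1, 0)

/-- Gradient of f with respect to s. -/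
def dS (f : Phase → ℝ) (γ : Phase) : R3 := fun a => fderiv ℝ f γ (0, 0, Pi.single a 1)

/-- Poisson bracket {f,g} = ∇ₓf·∇ₚg − ∇ₚf·∇ₓg + s·(∇ₛf × ∇ₛg) on Γ. -/
def pb (f g : Phase → ℝ) (γ : Phase) : ℝ :=
  dot3 (dX f γ) (dP g γ) - dot3 (dP f γ) (dX g γ)
    + dot3 γ.2.2 (cross3 (dS f γ) (dS g γ))

/-- Generator of spatial translations: P_a(x,p,s) = p_a. -/
def Pgen (a : Fin 3) : Phase → ℝ := fun γ => γ.2.1 a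

/-- Generator of rotations: J_ab(x,p,s) = x_a p_b − x_b p_a + ε_{abc} s_c. -/
def Jgen (a b : Fin 3) : Phase → ℝ :=
  fun γ => γ.1 a * γ.2.1 b - γ.1 b * γ.2.1 a + ∑ c, eps3 a b c * γ.2.2 c

/-- The subset of phase space where the momentum is nonzero. -/
def PhaseStar : Set Phase := {γ | γ.2.1 ≠ 0}

/-!
The bracket `{P_a, f}` is `-∂f/∂x_a`, so `f` does not depend on `x`. For `a ≠ b`, `{J_ab, f}` is
minus the derivative of `f` along the simultaneous rotation of `x`, `p` and `s` in the
`(a, b)`-plane, so `f` is constant along these rotations. Three plane rotations bring any `(p, s)`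
with `p ≠ 0` to the normal form `p = (|p|, 0, 0)`, `s = (u, √(|s|² - u²), 0)` with `u = p·s/|p|`,
which depends only on `|p|`, `p·s/|p|` and `|s|`.
-/

lemma isOpen_phaseStar : IsOpen PhaseStar :=
  isOpen_compl_singleton.preimage continuous_snd.fst

lemma dot3_self_eq_zero {v : R3} : dot3 v v = 0 ↔ v = 0 := dotProduct_self_eq_zero

lemma norm3_mul_self (v : R3) : norm3 v * norm3 v = dot3 v v :=
  Real.mul_self_sqrt (Finset.sum_nonneg fun i _ => mul_self_nonneg (v i))

lemma norm3_ne_zero {v : R3} (hv : v ≠ 0) : norm3 v ≠ 0 := fun h => by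
  simpa [dot3_self_eq_zero, h, hv] using (norm3_mul_self v).symm

def rotGen (a b : Fin 3) : R3 →ₗ[ℝ] R3 :=
  (LinearMap.proj a).smulRight (Pi.single b 1) - (LinearMap.proj b).smulRight (Pi.single a 1)

lemma rotGen_apply (a b : Fin 3) (v : R3) :
    rotGen a b v = v a • Pi.single b 1 - v b • Pi.single a 1 := rfl

lemma rotGen_rotGen_rotGen {a b : Fin 3} (hab : a ≠ b) (v : R3) :
    rotGen a b (rotGen a b (rotGen a b v)) = -rotGen a b v := by
  ext i
  simp only [rotGen_apply, Pi.sub_apply, Pi.smul_apply, ne_eq, hab, not_false_eq_true,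
    Pi.single_eq_of_ne, smul_eq_mul, mul_zero, Pi.single_eq_same, mul_one, zero_sub, neg_smul,
    hab.symm, sub_zero, Pi.neg_apply, neg_zero, Pi.single_apply, mul_ite, sub_neg_eq_add, neg_sub]
  split_ifs <;> simp_all

/-- Rodrigues' formula for `exp (t • rotGen a b)`; it applies since `rotGen a b ^ 3 = -rotGen a b`. -/
def rot (a b : Fin 3) (t : ℝ) (v : R3) : R3 :=
  v + Real.sin t • rotGen a b v + (1 - Real.cos t) • rotGen a b (rotGen a b v)

lemma rot_apply_left {a b : Fin 3} (hab : a ≠ b) (t : ℝ) (v : R3) :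
    rot a b t v a = Real.cos t * v a - Real.sin t * v b := by
  simp only [rot, rotGen_apply, Pi.add_apply, Pi.sub_apply, Pi.smul_apply, smul_eq_mul, ne_eq,
    hab, not_false_eq_true, Pi.single_eq_of_ne, Pi.single_eq_of_ne', Pi.single_eq_same, mul_zero,
    mul_one, zero_sub, sub_zero, neg_smul, mul_neg, Pi.neg_apply, neg_zero]
  ring

lemma rot_apply_right {a b : Fin 3} (hab : a ≠ b) (t : ℝ) (v : R3) :
    rot a b t v b = Real.sin t * v a + Real.cos t * v b := by
  simp only [rot, rotGen_apply, Pi.add_apply, Pi.sub_apply, Pi.smul_apply, smul_eq_mul, ne_eq,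
    hab, hab.symm, not_false_eq_true, Pi.single_eq_of_ne, Pi.single_eq_same, mul_zero, mul_one,
    zero_sub, sub_zero, neg_smul, Pi.neg_apply, mul_neg]
  ring

lemma rot_apply_of_ne {a b i : Fin 3} (hia : i ≠ a) (hib : i ≠ b) (t : ℝ) (v : R3) :
    rot a b t v i = v i := by
  simp [rot, rotGen_apply, hia, hib]

@[simp] lemma rot_zero_right (a b : Fin 3) (t : ℝ) : rot a b t 0 = 0 := by
  simp [rot]

lemma hasDerivAt_rot {a b : Fin 3} (hab : a ≠ b) (v : R3) (t : ℝ) :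
    HasDerivAt (fun t => rot a b t v) (rotGen a b (rot a b t v)) t := by
  have h := (((Real.hasDerivAt_sin t).smul_const (rotGen a b v)).const_add v).add
    (((Real.hasDerivAt_cos t).const_sub 1).smul_const (rotGen a b (rotGen a b v)))
  refine h.congr_deriv ?_
  simp only [rot, map_add, map_smul, rotGen_rotGen_rotGen hab]
  module

lemma dot3_rot {a b : Fin 3} (hab : a ≠ b) (t : ℝ) (v w : R3) :
    dot3 (rot a b t v) (rot a b t w) = dot3 v w := by
  have h : (v a * w a + v b * w b) * (Real.sin t ^ 2 + Real.cos t ^ 2 - 1) = 0 := by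
    simp [Real.sin_sq_add_cos_sq]
  -- stated before the case split so that it is specialised together with `a` and `b`
  fin_cases a <;> fin_cases b <;>
    simp only [Fin.zero_eta, Fin.mk_one, Fin.reduceFinMk, Fin.isValue] at hab h ⊢ <;>
    simp [dot3, Fin.sum_univ_three, rot_apply_left, rot_apply_right, rot_apply_of_ne] at hab ⊢ <;>
    linear_combination h

lemma rot_ne_zero {a b : Fin 3} (hab : a ≠ b) (t : ℝ) {v : R3} (hv : v ≠ 0) :
    rot a b t v ≠ 0 := by
  rwa [Ne, ← dot3_self_eq_zero, dot3_rot hab, dot3_self_eq_zero]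

lemma exists_rot_eq_sqrt_and_eq_zero {a b : Fin 3} (hab : a ≠ b) (v : R3) :
    ∃ t, rot a b t v a = √(v a ^ 2 + v b ^ 2) ∧ rot a b t v b = 0 := by
  set z : ℂ := ⟨v a, v b⟩
  have hz : ‖z‖ = √(v a ^ 2 + v b ^ 2) := by
    rw [Complex.norm_def, Complex.normSq_mk]; ring_nf
  have hre : ‖z‖ * Real.cos z.arg = v a := Complex.norm_mul_cos_arg z
  have him : ‖z‖ * Real.sin z.arg = v b := Complex.norm_mul_sin_arg z
  refine ⟨-z.arg, ?_, ?_⟩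
  · rw [rot_apply_left hab, Real.cos_neg, Real.sin_neg, ← hz]
    linear_combination -Real.cos z.arg * hre - Real.sin z.arg * him
      + ‖z‖ * Real.sin_sq_add_cos_sq z.arg
  · rw [rot_apply_right hab, Real.cos_neg, Real.sin_neg]
    linear_combination Real.sin z.arg * hre - Real.cos z.arg * him

lemma exists_apply_eq_apply_momentum_normalForm (g : R3 → R3 → ℝ)
    (hg : ∀ a b : Fin 3, a ≠ b → ∀ t p s, p ≠ 0 → g (rot a b t p) (rot a b t s) = g p s)
    {p : R3} (hp : p ≠ 0) (s : R3) :
    ∃ q, g p s = g ![norm3 p, 0, 0] q ∧ dot3 q q = dot3 s s ∧ norm3 p * q 0 = dot3 p s := by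
  obtain ⟨t₁, hp₁0, hp₁1⟩ := exists_rot_eq_sqrt_and_eq_zero (show (0 : Fin 3) ≠ 1 by decide) p
  set p₁ := rot 0 1 t₁ p
  obtain ⟨t₂, hp₂0, hp₂2⟩ := exists_rot_eq_sqrt_and_eq_zero (show (0 : Fin 3) ≠ 2 by decide) p₁
  have hp₁2 : p₁ 2 = p 2 := rot_apply_of_ne (by decide) (by decide) t₁ p
  have hp₂ : rot 0 2 t₂ p₁ = ![norm3 p, 0, 0] := by
    ext i
    fin_cases i
    · simp [hp₂0, hp₁0, hp₁2, Real.sq_sqrt (add_nonneg (sq_nonneg (p 0)) (sq_nonneg (p 1))),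
        norm3, dot3, Fin.sum_univ_three, ← sq, add_assoc]
    · simpa [hp₁1] using rot_apply_of_ne (by decide : (1 : Fin 3) ≠ 0) (by decide) t₂ p₁
    · simpa using hp₂2
  refine ⟨rot 0 2 t₂ (rot 0 1 t₁ s), ?_, ?_, ?_⟩
  · rw [← hp₂, hg 0 2 (by decide) t₂ _ _ (rot_ne_zero (by decide) t₁ hp),
      hg 0 1 (by decide) t₁ _ _ hp]
  · rw [dot3_rot (by decide), dot3_rot (by decide)]
  · have h := dot3_rot (show (0 : Fin 3) ≠ 2 by decide) t₂ p₁ (rot 0 1 t₁ s)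
    rw [hp₂, dot3_rot (by decide)] at h
    simpa [dot3, Fin.sum_univ_three] using h

theorem apply_eq_apply_normalForm (g : R3 → R3 → ℝ)
    (hg : ∀ a b : Fin 3, a ≠ b → ∀ t p s, p ≠ 0 → g (rot a b t p) (rot a b t s) = g p s)
    {p : R3} (hp : p ≠ 0) (s : R3) :
    g p s = g ![norm3 p, 0, 0]
      ![dot3 p s / norm3 p, √(norm3 s ^ 2 - (dot3 p s / norm3 p) ^ 2), 0] := by
  obtain ⟨q, hpq, hqq, hq0⟩ := exists_apply_eq_apply_momentum_normalForm g hg hp s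
  obtain ⟨t, hq1, hq2⟩ := exists_rot_eq_sqrt_and_eq_zero (show (1 : Fin 3) ≠ 2 by decide) q
  have hr : norm3 p ≠ 0 := norm3_ne_zero hp
  have hfix : rot 1 2 t ![norm3 p, 0, 0] = ![norm3 p, 0, 0] := by
    ext i; fin_cases i <;> simp [rot, rotGen_apply]
  have hq : rot 1 2 t q =
      ![dot3 p s / norm3 p, √(norm3 s ^ 2 - (dot3 p s / norm3 p) ^ 2), 0] := by
    have hq0' : q 0 = dot3 p s / norm3 p := by field_simp; linarith
    ext i
    fin_cases i
    · simpa [hq0'] using rot_apply_of_ne (by decide : (0 : Fin 3) ≠ 1) (by decide) t q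
    · change rot 1 2 t q 1 = _
      rw [hq1, ← hq0', sq (norm3 s), norm3_mul_self, ← hqq]
      simp only [dot3, Fin.sum_univ_three, Fin.isValue, Nat.succ_eq_add_one, Nat.reduceAdd,
        Fin.mk_one, Matrix.cons_val_one, Matrix.cons_val_zero]
      ring_nf
    · simpa using hq2
  rw [hpq, ← hg 1 2 (by decide) t ![norm3 p, 0, 0] q (by simp [hr]), hfix, hq]

lemma fderiv_apply_eq_dot3 (f : Phase → ℝ) (γ : Phase) (u v w : R3) :
    fderiv ℝ f γ (u, v, w) = dot3 u (dX f γ) + dot3 v (dP f γ) + dot3 w (dS f γ) := by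
  have h : ((u, v, w) : Phase) = ∑ i, (u i • ((Pi.single i 1 : R3), (0 : R3), (0 : R3))
      + v i • ((0 : R3), (Pi.single i 1 : R3), (0 : R3))
      + w i • ((0 : R3), (0 : R3), (Pi.single i 1 : R3))) := by
    ext j <;> simp [Prod.fst_sum, Prod.snd_sum, Finset.sum_apply, Pi.single_apply]
  rw [h, map_sum]
  simp only [map_add, map_smul, smul_eq_mul, Finset.sum_add_distrib, dot3, dX, dP, dS]

def xCoord (a : Fin 3) : Phase →L[ℝ] ℝ :=
  (ContinuousLinearMap.proj a).comp (ContinuousLinearMap.fst ℝ R3 (R3 × R3))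

def pCoord (a : Fin 3) : Phase →L[ℝ] ℝ :=
  (ContinuousLinearMap.proj a).comp
    ((ContinuousLinearMap.fst ℝ R3 R3).comp (ContinuousLinearMap.snd ℝ R3 (R3 × R3)))

def sCoord (a : Fin 3) : Phase →L[ℝ] ℝ :=
  (ContinuousLinearMap.proj a).comp
    ((ContinuousLinearMap.snd ℝ R3 R3).comp (ContinuousLinearMap.snd ℝ R3 (R3 × R3)))

@[simp] lemma xCoord_apply (a : Fin 3) (γ : Phase) : xCoord a γ = γ.1 a := rfl
@[simp] lemma pCoord_apply (a : Fin 3) (γ : Phase) : pCoord a γ = γ.2.1 a := rfl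
@[simp] lemma sCoord_apply (a : Fin 3) (γ : Phase) : sCoord a γ = γ.2.2 a := rfl

lemma pb_Pgen (a : Fin 3) (f : Phase → ℝ) (γ : Phase) : pb (Pgen a) f γ = -dX f γ a := by
  have h : fderiv ℝ (Pgen a) γ = pCoord a := (pCoord a).hasFDerivAt.fderiv
  simp [pb, dX, dP, dS, h, dot3, cross3, Pi.single_apply, Fin.sum_univ_three]

lemma fderiv_Jgen_apply (a b : Fin 3) (γ : Phase) (u v w : R3) :
    fderiv ℝ (Jgen a b) γ (u, v, w) =
      u a * γ.2.1 b + γ.1 a * v b - (u b * γ.2.1 a + γ.1 b * v a) + ∑ c, eps3 a b c * w c := by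
  have hJ : Jgen a b = fun γ =>
      xCoord a γ * pCoord b γ - xCoord b γ * pCoord a γ + ∑ c, eps3 a b c * sCoord c γ := rfl
  have h := (((xCoord a).hasFDerivAt.fun_mul (pCoord b).hasFDerivAt).fun_sub
    ((xCoord b).hasFDerivAt.fun_mul (pCoord a).hasFDerivAt)).fun_add
    (HasFDerivAt.fun_sum (u := Finset.univ) fun c _ =>
      (sCoord c).hasFDerivAt.const_mul (eps3 a b c) (x := γ))
  rw [hJ, h.fderiv]
  simp only [xCoord_apply, pCoord_apply, sCoord_apply, add_apply, sub_apply, smul_apply,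
    _root_.sum_apply, smul_eq_mul, add_left_inj]
  ring

lemma dX_Jgen (a b : Fin 3) (γ : Phase) : dX (Jgen a b) γ = -rotGen a b γ.2.1 := by
  ext c
  simp only [dX, fderiv_Jgen_apply, Pi.single_comm c, Pi.zero_apply, mul_zero, add_zero,
    Finset.sum_const_zero, rotGen_apply, Pi.neg_apply, Pi.sub_apply, Pi.smul_apply, smul_eq_mul,
    neg_sub]
  ring

lemma dP_Jgen (a b : Fin 3) (γ : Phase) : dP (Jgen a b) γ = rotGen a b γ.1 := by
  ext c
  simp [dP, fderiv_Jgen_apply, rotGen_apply, Pi.single_comm c]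

lemma dS_Jgen (a b : Fin 3) (γ : Phase) : dS (Jgen a b) γ = eps3 a b := by
  ext c
  simp [dS, fderiv_Jgen_apply, Pi.single_apply]

lemma dot3_cross3_eps3 {a b : Fin 3} (hab : a ≠ b) (s w : R3) :
    dot3 s (cross3 (eps3 a b) w) = -dot3 (rotGen a b s) w := by
  fin_cases a <;> fin_cases b <;> simp at hab ⊢ <;>
    simp [dot3, cross3, eps3, isgn, rotGen_apply, Fin.sum_univ_three]

lemma pb_Jgen {a b : Fin 3} (hab : a ≠ b) (f : Phase → ℝ) (γ : Phase) :
    pb (Jgen a b) f γ = -fderiv ℝ f γ (rotGen a b γ.1, rotGen a b γ.2.1, rotGen a b γ.2.2) := by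
  rw [pb, dX_Jgen, dP_Jgen, dS_Jgen, dot3_cross3_eps3 hab, fderiv_apply_eq_dot3]
  simp only [dot3, Pi.neg_apply, neg_mul, Finset.sum_neg_distrib]
  simp only [mul_comm]
  ring

theorem eq_of_fderiv_apply_eq_zero_along {E : Type*} [NormedAddCommGroup E] [NormedSpace ℝ E]
    {f : E → ℝ} {U : Set E} (hU : IsOpen U) (hf : DifferentiableOn ℝ f U) {c c' : ℝ → E}
    (hc : ∀ t, HasDerivAt c (c' t) t) (hcU : ∀ t, c t ∈ U)
    (h : ∀ t, fderiv ℝ f (c t) (c' t) = 0) (t : ℝ) : f (c t) = f (c 0) := by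
  have hd : ∀ t, HasDerivAt (f ∘ c) 0 t := fun t => by
    simpa [h t] using
      ((hf.differentiableAt (hU.mem_nhds (hcU t))).hasFDerivAt).comp_hasDerivAt t (hc t)
  exact is_const_of_deriv_eq_zero (fun t => (hd t).differentiableAt) (fun t => (hd t).deriv) t 0

lemma apply_eq_apply_zero_of_pb_Pgen {f : Phase → ℝ} (hf : DifferentiableOn ℝ f PhaseStar)
    (h : ∀ a : Fin 3, ∀ γ ∈ PhaseStar, pb (Pgen a) f γ = 0)
    (x : R3) {p : R3} (hp : p ≠ 0) (s : R3) : f (x, p, s) = f (0, p, s) := by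
  have hdX : ∀ γ ∈ PhaseStar, dX f γ = 0 := fun γ hγ => by
    ext a; simpa [pb_Pgen] using h a γ hγ
  have hc : ∀ t : ℝ, HasDerivAt (fun t => ((t • x, p, s) : Phase)) (x, 0, 0) t := fun t => by
    simpa using ((hasDerivAt_id t).smul_const x).prodMk
      ((hasDerivAt_const t p).prodMk (hasDerivAt_const t s))
  simpa using eq_of_fderiv_apply_eq_zero_along isOpen_phaseStar hf hc (fun _ => hp)
    (fun t => by simp [fderiv_apply_eq_dot3, hdX (t • x, p, s) hp, dot3]) 1

lemma apply_rot_eq_of_pb_Jgen {f : Phase → ℝ} (hf : DifferentiableOn ℝ f PhaseStar)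
    (h : ∀ a b : Fin 3, ∀ γ ∈ PhaseStar, pb (Jgen a b) f γ = 0)
    {a b : Fin 3} (hab : a ≠ b) (t : ℝ) (x : R3) {p : R3} (hp : p ≠ 0) (s : R3) :
    f (rot a b t x, rot a b t p, rot a b t s) = f (x, p, s) := by
  have hc : ∀ t : ℝ, HasDerivAt (fun t => ((rot a b t x, rot a b t p, rot a b t s) : Phase))
      (rotGen a b (rot a b t x), rotGen a b (rot a b t p), rotGen a b (rot a b t s)) t :=
    fun t => (hasDerivAt_rot hab x t).prodMk
      ((hasDerivAt_rot hab p t).prodMk (hasDerivAt_rot hab s t))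
  simpa [rot] using eq_of_fderiv_apply_eq_zero_along isOpen_phaseStar hf hc
    (fun t => rot_ne_zero hab t hp)
    (fun t => neg_eq_zero.mp ((pb_Jgen hab f _).symm.trans (h a b _ (rot_ne_zero hab t hp)))) t

theorem statement10 (f : Phase → ℝ) (hf : ContDiffOn ℝ 1 f PhaseStar)
    (h1 : ∀ a : Fin 3, ∀ γ ∈ PhaseStar, pb (Pgen a) f γ = 0)
    (h2 : ∀ a b : Fin 3, ∀ γ ∈ PhaseStar, pb (Jgen a b) f γ = 0) :
    ∃ F : ℝ → ℝ → ℝ → ℝ, ∀ x p s : R3, p ≠ 0 →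
      f (x, p, s) = F (norm3 p) (dot3 p s / norm3 p) (norm3 s) := by
  have hdiff := hf.differentiableOn one_ne_zero
  refine ⟨fun r u m => f (0, ![r, 0, 0], ![u, √(m ^ 2 - u ^ 2), 0]), fun x p s hp => ?_⟩
  rw [apply_eq_apply_zero_of_pb_Pgen hdiff h1 x hp s]
  refine apply_eq_apply_normalForm (fun p s => f (0, p, s)) (fun a b hab t p s hp => ?_) hp s
  simpa using apply_rot_eq_of_pb_Jgen hdiff h2 hab t 0 hp s
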